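/- If r is a square root on a pseudo MV-algebra M, then r(0)⁻ = r(0)∼, and there exists a unique Boolean element u ∈ M, namely u = r(0)⁻ ⊙ r(0)⁻, such that u ∨ r(0) = r(0)⁻. -/

import Mathlib

/-- A pseudo MV-algebra `(M; ⊕, ⁻, ∼, 0, 1)` satisfying axioms (A1)–(A8),
with `x ⊙ y := (y⁻ ⊕ x⁻)∼`. -/
class PseudoMV (M : Type*) where
  oplus : M → M → M
  lneg : M → M
  rneg : M → M
  zero : M
  one : M
  oplus_assoc : ∀ x y z : M, oplus x (oplus y z) = oplus (oplus x y) z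
  oplus_zero : ∀ x : M, oplus x zero = x
  zero_oplus : ∀ x : M, oplus zero x = x
  oplus_one : ∀ x : M, oplus x one = one
  one_oplus : ∀ x : M, oplus one x = one
  lneg_one : lneg one = zero
  rneg_one : rneg one = zero
  a5 : ∀ x y : M, rneg (oplus (lneg x) (lneg y)) = lneg (oplus (rneg x) (rneg y))
  a6₁ : ∀ x y : M,
    oplus x (rneg (oplus (lneg y) (lneg (rneg x)))) =
      oplus y (rneg (oplus (lneg x) (lneg (rneg y))))
  a6₂ : ∀ x y : M,
    oplus x (rneg (oplus (lneg y) (lneg (rneg x)))) =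
      oplus (rneg (oplus (lneg (lneg y)) (lneg x))) y
  a6₃ : ∀ x y : M,
    oplus x (rneg (oplus (lneg y) (lneg (rneg x)))) =
      oplus (rneg (oplus (lneg (lneg x)) (lneg y))) x
  a7 : ∀ x y : M,
    rneg (oplus (lneg (oplus (lneg x) y)) (lneg x)) =
      rneg (oplus (lneg y) (lneg (oplus x (rneg y))))
  a8 : ∀ x : M, rneg (lneg x) = x

namespace PseudoMV

variable {M : Type*} [PseudoMV M]

/-- `x ⊙ y := (y⁻ ⊕ x⁻)∼`. -/
def mul (x y : M) : M := rneg (oplus (lneg y) (lneg x))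

/-- `x ∨ y = x ⊕ (x∼ ⊙ y)` (axiom (A6)). -/
def sup (x y : M) : M := oplus x (mul (rneg x) y)

/-- `x ∧ y = x ⊙ (x⁻ ⊕ y)` (axiom (A7)). -/
def inf (x y : M) : M := mul x (oplus (lneg x) y)

/-- The lattice order of a pseudo MV-algebra. -/
def le (x y : M) : Prop := sup x y = y

/-- `x → y := x⁻ ⊕ y`. -/
def arrow (x y : M) : M := oplus (lneg x) y

/-- `x ⇝ y := y ⊕ x∼`. -/
def squig (x y : M) : M := oplus y (rneg x)

/-- A weak square root: (Sq1) and (Sq2). -/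
def IsWeakSqrt (r : M → M) : Prop :=
  (∀ x : M, mul (r x) (r x) = x) ∧
  (∀ x y : M, le (mul y y) x → le y (r x))

/-- A square root: (Sq1), (Sq2) and (Sq3). -/
def IsSqrt (r : M → M) : Prop :=
  IsWeakSqrt r ∧
  (∀ x : M, r (lneg x) = arrow (r x) (r zero) ∧ r (rneg x) = squig (r x) (r zero))

end PseudoMV

open PseudoMV

/-!
Put `a = r 0`, so `a ⊙ a = 0` by (Sq1). Then `(a⁻⁻)² = (a∼∼)² = 0`, and (Sq2) gives `a⁻⁻ ≤ a` and
`a∼∼ ≤ a`; negating these yields `a⁻ = a∼`, hence `a⁻⁻ = a`. (Sq3) at `a⁻ ⊙ a⁻` gives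
`r (a ⊕ a) ≤ a ⊕ a`, and `x ≤ r x` always holds, so `a ⊕ a` is a fixed point of `r`, hence
`⊙`-idempotent, and its negation `u = a⁻ ⊙ a⁻` is Boolean. As `u ≤ a⁻` is idempotent, `u ⊙ a⁻ = u`,
so `u ∨ a = (u ⊙ a⁻) ⊕ a = u ⊕ a ≥ a⁻` by residuation. Conversely a Boolean `v` with `v ∨ a = a⁻`
satisfies `v = v ⊙ v ≤ a⁻ ⊙ a⁻ = u`, and `a⁻ ≤ v ⊕ a` gives `u ≤ v` by residuation.
-/

namespace PseudoMV

variable {M : Type*} [PseudoMV M] {x y z : M}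

theorem lneg_rneg (x : M) : lneg (rneg x) = x := by
  have h := a5 x (one : M)
  rw [lneg_one, oplus_zero, rneg_one, oplus_zero, a8] at h
  exact h.symm

theorem lneg_zero : lneg (zero : M) = one := by rw [← rneg_one, lneg_rneg]

theorem rneg_zero : rneg (zero : M) = one := by rw [← lneg_one, a8]

theorem mul_eq_lneg (x y : M) : mul x y = lneg (oplus (rneg y) (rneg x)) := a5 y x

theorem lneg_mul (x y : M) : lneg (mul x y) = oplus (lneg y) (lneg x) := by
  rw [mul, lneg_rneg]

theorem rneg_mul (x y : M) : rneg (mul x y) = oplus (rneg y) (rneg x) := by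
  rw [mul_eq_lneg, a8]

theorem lneg_oplus (x y : M) : lneg (oplus x y) = mul (lneg y) (lneg x) := by
  rw [mul_eq_lneg, a8, a8]

theorem rneg_oplus (x y : M) : rneg (oplus x y) = mul (rneg y) (rneg x) := by
  rw [mul, lneg_rneg, lneg_rneg]

theorem lneg_lneg_mul (x y : M) : lneg (lneg (mul x y)) = mul (lneg (lneg x)) (lneg (lneg y)) := by
  rw [lneg_mul, mul_eq_lneg, a8, a8]

theorem rneg_rneg_mul (x y : M) : rneg (rneg (mul x y)) = mul (rneg (rneg x)) (rneg (rneg y)) := by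
  rw [rneg_mul, mul, lneg_rneg, lneg_rneg]

theorem oplus_rneg_self (x : M) : oplus x (rneg x) = one := by
  have h := a6₁ x (one : M)
  rwa [lneg_one, zero_oplus, lneg_rneg, one_oplus] at h

theorem lneg_oplus_self (x : M) : oplus (lneg x) x = one := by
  have h := a6₂ (one : M) x
  rw [one_oplus, lneg_one, oplus_zero, a8] at h
  exact h.symm

theorem mul_lneg_self (x : M) : mul x (lneg x) = zero := by
  rw [mul_eq_lneg, a8, oplus_rneg_self, lneg_one]

theorem sup_comm (x y : M) : sup x y = sup y x := a6₁ x y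

theorem sup_eq_mul_lneg_oplus (x y : M) : sup x y = oplus (mul x (lneg y)) y := a6₂ x y

theorem inf_eq_oplus_rneg_mul (x y : M) : inf x y = mul (oplus x (rneg y)) y := a7 x y

instance : LE M := ⟨le⟩

theorem le_iff_lneg_oplus_eq_one : x ≤ y ↔ oplus (lneg x) y = one := by
  constructor
  · intro h
    rw [← show sup x y = y from h, sup, oplus_assoc, lneg_oplus_self, one_oplus]
  · intro h
    show sup x y = y
    rw [sup_comm, sup, mul, lneg_rneg, h, rneg_one, oplus_zero]

theorem le_iff_oplus_rneg_eq_one : x ≤ y ↔ oplus y (rneg x) = one := by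
  constructor
  · intro h
    rw [← show sup x y = y from h, sup_comm, sup_eq_mul_lneg_oplus, ← oplus_assoc,
      oplus_rneg_self, oplus_one]
  · intro h
    show sup x y = y
    rw [sup_eq_mul_lneg_oplus, mul_eq_lneg, a8, h, lneg_one, zero_oplus]

theorem le_iff_exists_eq_oplus : x ≤ y ↔ ∃ w, y = oplus x w := by
  refine ⟨fun h => ⟨mul (rneg x) y, (show sup x y = y from h).symm⟩, ?_⟩
  rintro ⟨w, rfl⟩
  exact le_iff_lneg_oplus_eq_one.mpr (by rw [oplus_assoc, lneg_oplus_self, one_oplus])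

theorem le_iff_exists_eq_oplus' : x ≤ y ↔ ∃ w, y = oplus w x := by
  refine ⟨fun h => ⟨mul y (lneg x), ?_⟩, ?_⟩
  · rw [← sup_eq_mul_lneg_oplus, sup_comm]
    exact (show sup x y = y from h).symm
  · rintro ⟨w, rfl⟩
    exact le_iff_oplus_rneg_eq_one.mpr (by rw [← oplus_assoc, oplus_rneg_self, oplus_one])

theorem le_iff_mul_lneg_eq_zero : x ≤ y ↔ mul x (lneg y) = zero := by
  rw [le_iff_oplus_rneg_eq_one, mul_eq_lneg, a8]
  refine ⟨fun h => by rw [h, lneg_one], fun h => ?_⟩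
  rw [← a8 (oplus y (rneg x)), h, rneg_zero]

instance : PartialOrder M where
  le_refl x := le_iff_lneg_oplus_eq_one.mpr (lneg_oplus_self x)
  le_trans x y z hxy hyz := by
    obtain ⟨v, rfl⟩ := le_iff_exists_eq_oplus.mp hxy
    obtain ⟨w, rfl⟩ := le_iff_exists_eq_oplus.mp hyz
    exact le_iff_exists_eq_oplus.mpr ⟨oplus v w, (oplus_assoc x v w).symm⟩
  le_antisymm x y hxy hyx := by
    have hzero : mul (rneg y) x = zero := by
      rw [mul, lneg_rneg, le_iff_lneg_oplus_eq_one.mp hxy, rneg_one]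
    rw [← show sup y x = x from hyx, sup, hzero, oplus_zero]

theorem le_one (x : M) : x ≤ one := le_iff_lneg_oplus_eq_one.mpr (oplus_one _)

theorem le_self_oplus (x y : M) : x ≤ oplus x y := le_iff_exists_eq_oplus.mpr ⟨y, rfl⟩

theorem oplus_le_oplus_left (a : M) (h : x ≤ y) : oplus a x ≤ oplus a y := by
  obtain ⟨w, rfl⟩ := le_iff_exists_eq_oplus.mp h
  exact le_iff_exists_eq_oplus.mpr ⟨w, oplus_assoc a x w⟩

theorem oplus_le_oplus_right (a : M) (h : x ≤ y) : oplus x a ≤ oplus y a := by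
  obtain ⟨w, rfl⟩ := le_iff_exists_eq_oplus'.mp h
  exact le_iff_exists_eq_oplus'.mpr ⟨w, (oplus_assoc w x a).symm⟩

theorem lneg_le_lneg (h : x ≤ y) : lneg y ≤ lneg x :=
  le_iff_oplus_rneg_eq_one.mpr (by rw [a8]; exact le_iff_lneg_oplus_eq_one.mp h)

theorem rneg_le_rneg (h : x ≤ y) : rneg y ≤ rneg x :=
  le_iff_lneg_oplus_eq_one.mpr (by rw [lneg_rneg]; exact le_iff_oplus_rneg_eq_one.mp h)

theorem mul_le_iff_le_lneg_oplus : mul x y ≤ z ↔ y ≤ oplus (lneg x) z := by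
  rw [le_iff_lneg_oplus_eq_one, le_iff_lneg_oplus_eq_one, lneg_mul, oplus_assoc]

theorem mul_le_iff_le_oplus_rneg : mul x y ≤ z ↔ x ≤ oplus z (rneg y) := by
  rw [le_iff_oplus_rneg_eq_one, le_iff_oplus_rneg_eq_one, rneg_mul, oplus_assoc]

theorem mul_le_left (x y : M) : mul x y ≤ x :=
  mul_le_iff_le_lneg_oplus.mpr (lneg_oplus_self x ▸ le_one y)

theorem mul_le_right (x y : M) : mul x y ≤ y :=
  mul_le_iff_le_oplus_rneg.mpr (oplus_rneg_self y ▸ le_one x)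

theorem mul_le_mul_left (a : M) (h : x ≤ y) : mul a x ≤ mul a y :=
  mul_le_iff_le_lneg_oplus.mpr (h.trans (mul_le_iff_le_lneg_oplus.mp le_rfl))

theorem mul_le_mul_right (a : M) (h : x ≤ y) : mul x a ≤ mul y a :=
  mul_le_iff_le_oplus_rneg.mpr (h.trans (mul_le_iff_le_oplus_rneg.mp le_rfl))

theorem le_sup_left (x y : M) : x ≤ sup x y := le_self_oplus x _

theorem sup_le (hx : x ≤ z) (hy : y ≤ z) : sup x y ≤ z :=
  (oplus_le_oplus_left x (mul_le_mul_left (rneg x) hy)).trans_eq hx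

theorem sup_le_oplus (x y : M) : sup x y ≤ oplus x y :=
  oplus_le_oplus_left x (mul_le_right _ _)

theorem oplus_self_eq_of_mul_self_eq (h : mul x x = x) : oplus x x = x := by
  have hzero : mul (oplus x x) (lneg x) = zero := by
    have hinf := inf_eq_oplus_rneg_mul x (lneg x)
    rw [a8] at hinf
    rw [← hinf, inf, ← lneg_mul, h, mul_lneg_self]
  exact le_antisymm (le_iff_mul_lneg_eq_zero.mpr hzero) (le_self_oplus x x)

theorem mul_self_eq_of_oplus_self_eq (h : oplus x x = x) : mul x x = x := by
  have h' : oplus (rneg x) (rneg x) = rneg x :=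
    oplus_self_eq_of_mul_self_eq (by rw [← rneg_oplus, h])
  rw [mul_eq_lneg, h', lneg_rneg]

theorem mul_eq_self_of_le (hx : mul x x = x) (h : x ≤ y) : mul x y = x :=
  le_antisymm (mul_le_left x y) (calc
    x = mul x x := hx.symm
    _ ≤ mul x y := mul_le_mul_left x h)

theorem sup_mul_self_lneg_eq_lneg {a : M} (ha : mul a a = zero)
    (hu : mul (mul (lneg a) (lneg a)) (mul (lneg a) (lneg a)) = mul (lneg a) (lneg a)) :
    sup (mul (lneg a) (lneg a)) a = lneg a := by
  set u := mul (lneg a) (lneg a)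
  have hua : u ≤ lneg a := mul_le_left _ _
  have haa : a ≤ lneg a := le_iff_lneg_oplus_eq_one.mpr (by rw [← lneg_mul, ha, lneg_zero])
  refine le_antisymm (sup_le hua haa) ?_
  calc lneg a ≤ oplus u (rneg (lneg a)) := mul_le_iff_le_oplus_rneg.mp le_rfl
    _ = sup u a := by rw [sup_eq_mul_lneg_oplus, mul_eq_self_of_le hu hua, a8]

theorem eq_mul_self_lneg_of_sup_eq {a v : M} (hv : oplus v v = v) (hsup : sup v a = lneg a) :
    v = mul (lneg a) (lneg a) := by
  have hva : v ≤ lneg a := hsup ▸ le_sup_left v a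
  apply le_antisymm
  · calc v = mul v v := (mul_self_eq_of_oplus_self_eq hv).symm
      _ ≤ mul v (lneg a) := mul_le_mul_left v hva
      _ ≤ mul (lneg a) (lneg a) := mul_le_mul_right _ hva
  · refine mul_le_iff_le_oplus_rneg.mpr ?_
    calc lneg a = sup v a := hsup.symm
      _ ≤ oplus v a := sup_le_oplus v a
      _ = oplus v (rneg (lneg a)) := by rw [a8]

namespace IsWeakSqrt

variable {r : M → M}

theorem le_sqrt (hr : IsWeakSqrt r) (x : M) : x ≤ r x := hr.2 x x (mul_le_left x x)

theorem mul_self_eq_of_sqrt_le (hr : IsWeakSqrt r) (h : r x ≤ x) : mul x x = x := by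
  simpa only [le_antisymm h (hr.le_sqrt x)] using hr.1 x

theorem lneg_sqrt_zero_eq_rneg (hr : IsWeakSqrt r) : lneg (r zero) = rneg (r zero) := by
  have hll : lneg (lneg (r zero)) ≤ r zero := hr.2 zero _ (by
    rw [← lneg_lneg_mul, hr.1 zero, lneg_zero, lneg_one]; exact le_refl (zero : M))
  have hrr : rneg (rneg (r zero)) ≤ r zero := hr.2 zero _ (by
    rw [← rneg_rneg_mul, hr.1 zero, rneg_zero, rneg_one]; exact le_refl (zero : M))
  apply le_antisymm
  · simpa only [lneg_rneg] using lneg_le_lneg hrr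
  · simpa only [a8] using rneg_le_rneg hll

end IsWeakSqrt

theorem IsSqrt.sqrt_lneg_oplus_lneg_le {r : M → M} (hr : IsSqrt r) (y : M) :
    r (oplus (lneg y) (lneg y)) ≤ oplus (lneg y) (r zero) := by
  have hy : y ≤ r (mul y y) := hr.1.2 _ _ (le_refl (mul y y))
  rw [← lneg_mul, (hr.2 _).1]
  exact oplus_le_oplus_right _ (lneg_le_lneg hy)

end PseudoMV

theorem stmt13 {M : Type*} [PseudoMV M] (r : M → M) (hr : IsSqrt r) :
    lneg (r zero) = rneg (r zero) ∧
    (oplus (mul (lneg (r zero)) (lneg (r zero))) (mul (lneg (r zero)) (lneg (r zero))) =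
      mul (lneg (r zero)) (lneg (r zero))) ∧
    sup (mul (lneg (r zero)) (lneg (r zero))) (r zero) = lneg (r zero) ∧
    (∀ v : M, oplus v v = v → sup v (r zero) = lneg (r zero) →
      v = mul (lneg (r zero)) (lneg (r zero))) := by
  have ha : lneg (r zero) = rneg (r zero) := hr.1.lneg_sqrt_zero_eq_rneg
  have hlla : lneg (lneg (r zero)) = r zero := by rw [ha, lneg_rneg]
  have hfix : r (oplus (r zero) (r zero)) ≤ oplus (r zero) (r zero) := by
    simpa only [hlla] using hr.sqrt_lneg_oplus_lneg_le (lneg (r zero))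
  have hbool : oplus (mul (lneg (r zero)) (lneg (r zero))) (mul (lneg (r zero)) (lneg (r zero))) =
      mul (lneg (r zero)) (lneg (r zero)) := by
    rw [← lneg_oplus, ← lneg_mul, hr.1.mul_self_eq_of_sqrt_le hfix]
  exact ⟨ha, hbool, sup_mul_self_lneg_eq_lneg (hr.1.1 zero) (mul_self_eq_of_oplus_self_eq hbool),
    fun v hv hsup => eq_mul_self_lneg_of_sup_eq hv hsup⟩
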